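/- arXiv:2506.05525 — 5 statements merged into one kernel-verified Lean document; each statement's English description precedes it below -/
import Mathlib

section
/- For any monotone function g : C → C on a complete lattice C, the least fixpoint (in the function lattice C → C ordered pointwise) of the operator G defined by G(f) = λc. c ∨ f(g(c)) equals the function λc. ⋁_{n∈ℕ} gⁿ(c), provided g is ω-continuous (or additive). Consequently the Kleene star r* can be encoded as the KAF fixpoint μX.(1 ⊕ r;X). -/
/-- Knaster–Tarski least fixpoint of an operator on the function lattice. -/
noncomputable def funLfp {C : Type*} [CompleteLattice C]
    (G : (C → C) → (C → C)) : C → C :=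
  sInf {f : C → C | G f ≤ f}

theorem funLfp_eq_of_isLeast {C : Type*} [CompleteLattice C] {G : (C → C) → (C → C)}
    {h : C → C} (hh : IsLeast {f | G f ≤ f} h) : funLfp G = h :=
  hh.isGLB.sInf_eq

section Iterate

variable {C : Type*} [CompleteLattice C] (g : C → C)

theorem sup_iSup_iterate_apply (c : C) :
    c ⊔ ⨆ n : ℕ, g^[n] (g c) = ⨆ n : ℕ, g^[n] c := by
  simpa only [Function.iterate_succ_apply, Function.iterate_zero_apply] using
    sup_iSup_nat_succ fun n => g^[n] c

variable {g}

theorem iterate_le_of_sup_comp_le {f : C → C} (hf : ∀ c, c ⊔ f (g c) ≤ f c) :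
    ∀ (n : ℕ) (c : C), g^[n] c ≤ f c
  | 0, c => le_sup_left.trans (hf c)
  | n + 1, c =>
    calc g^[n] (g c) ≤ f (g c) := iterate_le_of_sup_comp_le hf n (g c)
      _ ≤ f c := le_sup_right.trans (hf c)

theorem isLeast_iSup_iterate :
    IsLeast {f : C → C | (fun c => c ⊔ f (g c)) ≤ f} fun c => ⨆ n : ℕ, g^[n] c :=
  ⟨fun c => (sup_iSup_iterate_apply g c).le,
    fun _ hf c => iSup_le fun n => iterate_le_of_sup_comp_le hf n c⟩

end Iterate

theorem star_as_fixpoint_right_general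
    {C : Type*} [CompleteLattice C] (g : C → C) :
    funLfp (fun f : C → C => fun c => c ⊔ f (g c)) =
      fun c => ⨆ n : ℕ, g^[n] c :=
  funLfp_eq_of_isLeast isLeast_iSup_iterate

theorem star_as_fixpoint_right
    {C : Type*} [CompleteLattice C] (g : C → C) (hmono : Monotone g)
    (hadd : ∀ S : Set C, g (sSup S) = sSup (g '' S)) :
    funLfp (fun f : C → C => fun c => c ⊔ f (g c)) =
      fun c => ⨆ n : ℕ, g^[n] c :=
  star_as_fixpoint_right_general g
end

section
/- For an additive function g : C → C on a complete lattice C, the least fixpoint of the operator G'(f) = λc. c ∨ g(f(c)) (on C → C with pointwise order) equals λc. ⋁_{n∈ℕ} gⁿ(c). That is, for additive semantics the Kleene star r* can also be encoded as μX.(1 ⊕ X;r). -/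
section FunLfp

variable {C : Type*} [CompleteLattice C]

theorem funLfp_le {G : (C → C) → (C → C)} {f : C → C} (h : G f ≤ f) : funLfp G ≤ f :=
  sInf_le h

theorem le_funLfp {G : (C → C) → (C → C)} {f : C → C} (h : ∀ f', G f' ≤ f' → f ≤ f') :
    f ≤ funLfp G :=
  le_sInf h

theorem iSup_iterate_le_of_sup_map_le {g : C → C} (hg : Monotone g) {f : C → C}
    (hf : ∀ x, x ⊔ g (f x) ≤ f x) (c : C) : ⨆ n : ℕ, g^[n] c ≤ f c := by
  refine iSup_le fun n => ?_
  induction n with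
  | zero => exact le_sup_left.trans (hf c)
  | succ n ih =>
    rw [Function.iterate_succ_apply']
    exact (hg ih).trans (le_sup_right.trans (hf c))

theorem sup_map_iSup_iterate (g : sSupHom C C) (c : C) :
    c ⊔ g (⨆ n : ℕ, g^[n] c) = ⨆ n : ℕ, g^[n] c := by
  rw [map_iSup, ← sup_iSup_nat_succ (fun n => g^[n] c)]
  simp only [Function.iterate_zero_apply, Function.iterate_succ_apply']

end FunLfp

theorem star_as_fixpoint_left
    {C : Type*} [CompleteLattice C] (g : C → C)
    (hadd : ∀ S : Set C, g (sSup S) = sSup (g '' S)) :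
    funLfp (fun f : C → C => fun c => c ⊔ g (f c)) =
      fun c => ⨆ n : ℕ, g^[n] c := by
  let φ : sSupHom C C := ⟨g, hadd⟩
  refine le_antisymm (funLfp_le fun c => (sup_map_iSup_iterate φ c).le) ?_
  exact le_funLfp fun f hf => iSup_iterate_le_of_sup_map_le (OrderHomClass.mono φ) hf
end

section
/- There exists a monotone but non-additive function u on a powerset lattice for which the encoding of Kleene star via μX.(1 ⊕ X;u) is strictly larger than the true iteration: concretely, for U = {a,b,c} and u : 𝒫(U) → 𝒫(U) with u({a,b}) = u(U) = U and u(S) = {b} for every other S, one has ⋁_{n∈ℕ} uⁿ({a}) = {a,b}, while lfp(λf. λS. S ∪ u(f(S))) applied to {a} equals U. -/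
/-!
The iterates of `u` never see `a` and `b` together: `u {a} = {b}` and `{b}` is fixed, so the
join of the iterates is `{a, b}`. The encoding instead accumulates: a prefixed point `f` has `{a} ∪ u (f {a}) ⊆ f {a}`,
so `f {a} ⊇ {a, b}`, hence `u (f {a}) = U` and `f {a} = U`.
-/

open Classical in
/-- The counterexample function on 𝒫({a,b,c}) with a = 0, b = 1, c = 2. -/
noncomputable def uFun (S : Set (Fin 3)) : Set (Fin 3) :=
  if S = {0, 1} ∨ S = Set.univ then Set.univ else {1}

theorem iSup_iterate_eq_sup_of_apply_fixed {α : Type*} [CompleteLattice α] {f : α → α} {a b : α}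
    (ha : f a = b) (hb : f b = b) : ⨆ n : ℕ, f^[n] a = a ⊔ b := by
  rw [← sup_iSup_nat_succ]
  simp only [Function.iterate_zero_apply, Function.iterate_succ_apply, ha,
    Function.iterate_fixed hb, iSup_const]

namespace uFun

open Set

lemma eq_or_eq_univ_of_subset {S : Set (Fin 3)} (h : ({0, 1} : Set (Fin 3)) ⊆ S) :
    S = {0, 1} ∨ S = univ := by
  rw [insert_subset_iff, singleton_subset_iff] at h
  by_cases h2 : (2 : Fin 3) ∈ S
  · right
    ext x
    fin_cases x <;> simp_all
  · left
    ext x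
    fin_cases x <;> simp_all

open Classical in
lemma eq_ite (S : Set (Fin 3)) :
    uFun S = if ({0, 1} : Set (Fin 3)) ⊆ S then univ else {1} := by
  have hcond : (S = {0, 1} ∨ S = univ) ↔ ({0, 1} : Set (Fin 3)) ⊆ S :=
    ⟨by rintro (rfl | rfl) <;> simp, eq_or_eq_univ_of_subset⟩
  simp only [uFun, hcond]

lemma of_subset {S : Set (Fin 3)} (h : ({0, 1} : Set (Fin 3)) ⊆ S) : uFun S = univ := by
  rw [eq_ite, if_pos h]

lemma of_not_subset {S : Set (Fin 3)} (h : ¬ ({0, 1} : Set (Fin 3)) ⊆ S) : uFun S = {1} := by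
  rw [eq_ite, if_neg h]

lemma one_mem (S : Set (Fin 3)) : (1 : Fin 3) ∈ uFun S := by
  rw [eq_ite]
  split_ifs <;> simp

lemma monotone : Monotone uFun := by
  intro S T hST
  by_cases hS : ({0, 1} : Set (Fin 3)) ⊆ S
  · rw [of_subset hS, of_subset (hS.trans hST)]
  · rw [of_not_subset hS, singleton_subset_iff]
    exact one_mem T

lemma singleton_zero : uFun {0} = {1} :=
  of_not_subset fun h => by simpa using h (mem_insert_of_mem 0 rfl)

lemma singleton_one : uFun {1} = {1} :=
  of_not_subset fun h => by simpa using h (mem_insert 0 {1})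

lemma pair_zero_one : uFun {0, 1} = univ :=
  of_subset subset_rfl

lemma not_map_sSup : ¬ ∀ S : Set (Set (Fin 3)), uFun (sSup S) = sSup (uFun '' S) := by
  intro h
  have hpair := h {{0}, {1}}
  rw [sSup_pair, image_pair, sSup_pair, singleton_zero, singleton_one, sup_idem] at hpair
  simp only [sup_eq_union, singleton_union, pair_zero_one] at hpair
  simpa using hpair.le (mem_univ (0 : Fin 3))

lemma iSup_iterate_singleton_zero : ⨆ n : ℕ, uFun^[n] {0} = ({0, 1} : Set (Fin 3)) := by
  rw [iSup_iterate_eq_sup_of_apply_fixed singleton_zero singleton_one]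
  exact singleton_union

lemma eq_univ_of_singleton_zero_union_subset {T : Set (Fin 3)} (hT : {0} ∪ uFun T ⊆ T) :
    T = univ := by
  have hT01 : ({0, 1} : Set (Fin 3)) ⊆ T := by
    rw [insert_subset_iff, singleton_subset_iff]
    exact ⟨hT (Or.inl rfl), hT (Or.inr (one_mem T))⟩
  rw [of_subset hT01, union_univ] at hT
  exact univ_subset_iff.mp hT

end uFun

theorem nonadditive_star_encoding_fails :
    Monotone uFun ∧
    ¬ (∀ S : Set (Set (Fin 3)), uFun (sSup S) = sSup (uFun '' S)) ∧
    (⨆ n : ℕ, uFun^[n] {0}) = ({0, 1} : Set (Fin 3)) ∧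
    sInf {f : Set (Fin 3) → Set (Fin 3) |
        (fun S => S ∪ uFun (f S)) ≤ f} {0} = Set.univ := by
  refine ⟨uFun.monotone, uFun.not_map_sSup, uFun.iSup_iterate_singleton_zero, ?_⟩
  rw [sInf_apply, ← Set.top_eq_univ, iInf_eq_top]
  rintro ⟨f, hf⟩
  exact uFun.eq_univ_of_singleton_zero_union_subset (hf {0})
end

section
/- Equivalence adjunction: let L be a complete lattice and ∼ a compatible equivalence on L (each equivalence class is closed under joins of its non-empty subsets). Define 𝒫_∼(L) = {X ⊆ L | every equivalence class meets X in at most one point}, with X ≤_∼ Y iff for all x ∈ X there is y ∈ Y with x ∼ y and x ≤ y. Then ≤_∼ is a partial order, 𝒫_∼(L) is a complete lattice with join ⋁ W = α_∼(⋃ W) where α_∼(X) = {⋁(X ∩ [x]_∼) | x ∈ X}, and the pair (α_∼, γ_∼) with γ_∼(Y) = ⋃{[y]_∼ ∩ ↓y | y ∈ Y} is a Galois connection from 𝒫(L) (ordered by inclusion) to 𝒫_∼(L). -/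
variable {L : Type*}

/-- Carrier of the quotient-like domain: subsets containing at most one
representative of each equivalence class. -/
def EqCarrier (r : L → L → Prop) : Set (Set L) :=
  {X : Set L | ∀ x ∈ X, ∀ y ∈ X, r x y → x = y}

/-- The order on the equivalence-quotient domain. -/
def eqLe [Preorder L] (r : L → L → Prop) (X Y : Set L) : Prop :=
  ∀ x ∈ X, ∃ y ∈ Y, r x y ∧ x ≤ y

/-- The abstraction map of the equivalence adjunction. -/
def eqAlpha [CompleteLattice L] (r : L → L → Prop) (X : Set L) : Set L :=
  {z : L | ∃ x ∈ X, z = sSup (X ∩ {y : L | r y x})}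

/-- The concretization map of the equivalence adjunction. -/
def eqGamma [Preorder L] (r : L → L → Prop) (Y : Set L) : Set L :=
  {z : L | ∃ y ∈ Y, r z y ∧ z ≤ y}

/-- Compatibility: every equivalence class is closed under joins of
non-empty subsets. -/
def CompatibleEquiv [CompleteLattice L] (r : L → L → Prop) : Prop :=
  Equivalence r ∧
    ∀ (x : L) (S : Set L), S.Nonempty → (∀ y ∈ S, r y x) → r (sSup S) x

/-!
`eqLe r X Y` says literally that `X ⊆ eqGamma r Y`, so the Galois connection amounts to
`eqLe r (eqAlpha r X) Y ↔ eqLe r X Y`. Compatibility puts the join of each slice `X ∩ [x]` in the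
class of `x`, above `x`, so `X` lies below `eqAlpha r X`. Conversely, if `Y` meets every class at most
once, each element of the slice lies below the element of `Y` in the class of `x`, hence so does the
join. Joins in the carrier then come for free, since `eqLe r (⋃₀ W) Z` holds iff `eqLe r X Z` for
all `X ∈ W`.
-/

section

variable {r : L → L → Prop} {X Y Z : Set L}

section Preorder

variable [Preorder L]

theorem eqLe_refl [Std.Refl r] (X : Set L) : eqLe r X X :=
  fun x hx => ⟨x, hx, refl_of r x, le_rfl⟩

theorem eqLe_trans [IsTrans L r] (hXY : eqLe r X Y) (hYZ : eqLe r Y Z) : eqLe r X Z := by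
  intro x hx
  obtain ⟨y, hy, hxy, hxy'⟩ := hXY x hx
  obtain ⟨z, hz, hyz, hyz'⟩ := hYZ y hy
  exact ⟨z, hz, trans_of r hxy hyz, hxy'.trans hyz'⟩

theorem eqLe_iff_subset_eqGamma : eqLe r X Y ↔ X ⊆ eqGamma r Y :=
  Iff.rfl

theorem eqLe_sUnion_iff {W : Set (Set L)} : eqLe r (⋃₀ W) Z ↔ ∀ X ∈ W, eqLe r X Z :=
  ⟨fun h _ hX x hx => h x ⟨_, hX, hx⟩, fun h _ ⟨X, hX, hx⟩ => h X hX _ hx⟩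

end Preorder

theorem subset_of_eqLe_of_eqLe [PartialOrder L] [IsTrans L r] (hX : X ∈ EqCarrier r)
    (hXY : eqLe r X Y) (hYX : eqLe r Y X) : X ⊆ Y := by
  intro x hx
  obtain ⟨y, hy, hxy, hxy'⟩ := hXY x hx
  obtain ⟨x', hx', hyx', hyx''⟩ := hYX y hy
  obtain rfl : x = x' := hX x hx x' hx' (trans_of r hxy hyx')
  rwa [le_antisymm hxy' hyx'']

theorem eqLe_antisymm [PartialOrder L] [IsTrans L r] (hX : X ∈ EqCarrier r)
    (hY : Y ∈ EqCarrier r) (hXY : eqLe r X Y) (hYX : eqLe r Y X) : X = Y :=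
  (subset_of_eqLe_of_eqLe hX hXY hYX).antisymm (subset_of_eqLe_of_eqLe hY hYX hXY)

theorem inter_class_eq_of_rel {x y : L} (hr : Equivalence r) (hxy : r x y) :
    X ∩ {z | r z x} = X ∩ {z | r z y} := by
  ext z
  exact and_congr_right fun _ => ⟨fun h => hr.trans h hxy, fun h => hr.trans h (hr.symm hxy)⟩

section CompleteLattice

variable [CompleteLattice L] {x y : L}

theorem le_sSup_inter_class [Std.Refl r] (hx : x ∈ X) : x ≤ sSup (X ∩ {y | r y x}) :=
  le_sSup ⟨hx, refl_of r x⟩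

theorem sSup_inter_class_rel (hr : CompatibleEquiv r) (hx : x ∈ X) :
    r (sSup (X ∩ {y | r y x})) x :=
  hr.2 x _ ⟨x, hx, hr.1.refl x⟩ fun _ hy => hy.2

theorem sSup_inter_class_le (hr : Equivalence r) (hY : Y ∈ EqCarrier r) (hXY : eqLe r X Y)
    (hy : y ∈ Y) (hxy : r x y) : sSup (X ∩ {z | r z x}) ≤ y := by
  refine sSup_le fun u ⟨hu, hux⟩ => ?_
  obtain ⟨y', hy', huy', huy''⟩ := hXY u hu
  obtain rfl : y = y' := hY y hy y' hy' (hr.trans (hr.symm hxy) (hr.trans (hr.symm hux) huy'))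
  exact huy''

theorem eqAlpha_mem_eqCarrier (hr : CompatibleEquiv r) (X : Set L) : eqAlpha r X ∈ EqCarrier r := by
  rintro _ ⟨x₁, hx₁, rfl⟩ _ ⟨x₂, hx₂, rfl⟩ h
  have h₁₂ : r x₁ x₂ :=
    hr.1.trans (hr.1.symm (sSup_inter_class_rel hr hx₁)) (hr.1.trans h (sSup_inter_class_rel hr hx₂))
  rw [inter_class_eq_of_rel hr.1 h₁₂]

theorem eqLe_eqAlpha_self (hr : CompatibleEquiv r) (X : Set L) : eqLe r X (eqAlpha r X) :=
  have := hr.1.stdRefl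
  fun x hx => ⟨_, ⟨x, hx, rfl⟩, hr.1.symm (sSup_inter_class_rel hr hx), le_sSup_inter_class hx⟩

theorem eqAlpha_eqLe_of_eqLe (hr : CompatibleEquiv r) (hY : Y ∈ EqCarrier r) (hXY : eqLe r X Y) :
    eqLe r (eqAlpha r X) Y := by
  rintro _ ⟨x, hx, rfl⟩
  obtain ⟨y, hy, hxy, -⟩ := hXY x hx
  exact ⟨y, hy, hr.1.trans (sSup_inter_class_rel hr hx) hxy, sSup_inter_class_le hr.1 hY hXY hy hxy⟩

theorem eqAlpha_eqLe_iff (hr : CompatibleEquiv r) (hY : Y ∈ EqCarrier r) :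
    eqLe r (eqAlpha r X) Y ↔ eqLe r X Y :=
  have := hr.1.isTrans
  ⟨eqLe_trans (eqLe_eqAlpha_self hr X), eqAlpha_eqLe_of_eqLe hr hY⟩

end CompleteLattice

end

theorem equivalence_adjunction [CompleteLattice L]
    (r : L → L → Prop) (hr : CompatibleEquiv r) :
    -- ≤_∼ is a partial order on the carrier
    (∀ X : Set L, eqLe r X X) ∧
    (∀ X ∈ EqCarrier r, ∀ Y ∈ EqCarrier r,
      eqLe r X Y → eqLe r Y X → X = Y) ∧
    (∀ X Y Z : Set L, eqLe r X Y → eqLe r Y Z → eqLe r X Z) ∧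
    -- the abstraction lands in the carrier
    (∀ X : Set L, eqAlpha r X ∈ EqCarrier r) ∧
    -- complete lattice structure: joins are given by `eqAlpha` of unions
    (∀ W : Set (Set L), (∀ X ∈ W, X ∈ EqCarrier r) →
      (∀ X ∈ W, eqLe r X (eqAlpha r (⋃₀ W))) ∧
      (∀ Z ∈ EqCarrier r, (∀ X ∈ W, eqLe r X Z) →
        eqLe r (eqAlpha r (⋃₀ W)) Z)) ∧
    -- Galois connection
    (∀ X : Set L, ∀ Y ∈ EqCarrier r,
      (eqLe r (eqAlpha r X) Y ↔ X ⊆ eqGamma r Y)) := by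
  have := hr.1.stdRefl
  have := hr.1.isTrans
  refine ⟨eqLe_refl, fun X hX Y hY => eqLe_antisymm hX hY, fun X Y Z => eqLe_trans,
    eqAlpha_mem_eqCarrier hr, fun W _ => ⟨?_, ?_⟩,
    fun X Y hY => (eqAlpha_eqLe_iff hr hY).trans eqLe_iff_subset_eqGamma⟩
  · exact eqLe_sUnion_iff.1 (eqLe_eqAlpha_self hr _)
  · exact fun Z hZ hWZ => (eqAlpha_eqLe_iff hr hZ).2 (eqLe_sUnion_iff.2 hWZ)
end

section
/- Local completeness is implied by under-approximations with equal abstraction: given a Galois connection ⟨α,γ⟩ : C ⇄ A between complete lattices, a monotone f : C → C, and u, c ∈ C with u ≤ c and α(u) = α(c), local completeness of A for f at u (i.e., α(f(u)) = α(f(γ(α(u))))) implies local completeness of A for f at c (i.e., α(f(c)) = α(f(γ(α(c))))). -/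
theorem local_completeness_convex
    {C A : Type*} [CompleteLattice C] [CompleteLattice A]
    (α : C → A) (γ : A → C) (gc : GaloisConnection α γ)
    (f : C → C) (hf : Monotone f) (u c : C) (huc : u ≤ c) (hα : α u = α c)
    (hlc : α (f u) = α (f (γ (α u)))) :
    α (f c) = α (f (γ (α c))) := by
  refine le_antisymm (gc.monotone_l (hf (gc.le_u_l c))) ?_
  calc α (f (γ (α c))) = α (f (γ (α u))) := by rw [hα]
    _ = α (f u) := hlc.symm
    _ ≤ α (f c) := gc.monotone_l (hf huc)
end
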